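/- Under the same constant-coefficient setting, define T₋(x) = ∫₀¹ ( g̃0(δ,ẋ) − sqrt( g̃0(δ,ẋ)² + g̃0(ẋ,ẋ) ) ) ds and T̃₋(x) = ∫₀¹ g̃0(δ,ẋ) ds − sqrt( (∫₀¹ (g0(ẋ,ẋ) + g̃0(δ,ẋ) g0(δ,ẋ)) ds) · (1/β) ). Then T̃₋(x) ≤ T₋(x). -/

import Mathlib

open MeasureTheory

/-! Since `g0(ẋ,ẋ) + g̃0(δ,ẋ) g0(δ,ẋ)` divided by `β` is `u = g̃0(δ,ẋ)² + g̃0(ẋ,ẋ) ≥ 0`, the linear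
terms cancel and `T₋ - T̃₋ = √(∫ u) - ∫ √u`, which is nonnegative by Jensen's inequality for the
concave square root on the probability space `[0,1]`. -/

theorem integral_sqrt_le_sqrt_integral {α : Type*} [MeasurableSpace α] {μ : Measure α}
    [IsProbabilityMeasure μ] {f : α → ℝ} (hf : 0 ≤ᵐ[μ] f) (hfi : Integrable f μ)
    (hsf : Integrable (fun a => √(f a)) μ) :
    ∫ a, √(f a) ∂μ ≤ √(∫ a, f a ∂μ) :=
  Real.strictConcaveOn_sqrt.concaveOn.le_map_integral Real.continuous_sqrt.continuousOn
    isClosed_Ici hf hfi hsf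

theorem intervalIntegral_sqrt_le_sqrt_intervalIntegral {f : ℝ → ℝ}
    (hf : ∀ s ∈ Set.Ioc (0 : ℝ) 1, 0 ≤ f s) (hfi : IntervalIntegrable f volume 0 1)
    (hsf : IntervalIntegrable (fun s => √(f s)) volume 0 1) :
    ∫ s in (0 : ℝ)..1, √(f s) ≤ √(∫ s in (0 : ℝ)..1, f s) := by
  have : IsProbabilityMeasure (volume.restrict (Set.Ioc (0 : ℝ) 1)) := ⟨by simp⟩
  simp only [intervalIntegral.integral_of_le zero_le_one]
  exact integral_sqrt_le_sqrt_integral (ae_restrict_of_forall_mem measurableSet_Ioc hf)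
    hfi.1 hsf.1

theorem Ttildeminus_le_Tminus_general {n : ℕ}
    (g0 : EuclideanSpace ℝ (Fin n) →ₗ[ℝ] EuclideanSpace ℝ (Fin n) →ₗ[ℝ] ℝ)
    (hpos : ∀ y, y ≠ 0 → 0 < g0 y y)
    (δ : EuclideanSpace ℝ (Fin n)) (β : ℝ) (hβ : 0 < β)
    (x' : ℝ → EuclideanSpace ℝ (Fin n))
    (hint1 : IntervalIntegrable (fun s => g0 δ (x' s) / β) volume 0 1)
    (hint2 : IntervalIntegrable
      (fun s => Real.sqrt ((g0 δ (x' s) / β) ^ 2 + g0 (x' s) (x' s) / β)) volume 0 1)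
    (hint3 : IntervalIntegrable
      (fun s => g0 (x' s) (x' s) + (g0 δ (x' s) / β) * g0 δ (x' s)) volume 0 1) :
    (∫ s in (0:ℝ)..1, g0 δ (x' s) / β)
      - Real.sqrt
          ((∫ s in (0:ℝ)..1, (g0 (x' s) (x' s) + (g0 δ (x' s) / β) * g0 δ (x' s)))
            * (1 / β))
      ≤ ∫ s in (0:ℝ)..1,
          (g0 δ (x' s) / β - Real.sqrt ((g0 δ (x' s) / β) ^ 2 + g0 (x' s) (x' s) / β)) := by
  set u : ℝ → ℝ := fun s => (g0 δ (x' s) / β) ^ 2 + g0 (x' s) (x' s) / β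
  have hg0_nonneg : ∀ y, 0 ≤ g0 y y := fun y => by
    rcases eq_or_ne y 0 with rfl | hy
    · simp
    · exact (hpos y hy).le
  have hu_nonneg : ∀ s, 0 ≤ u s := fun s => by
    have := hg0_nonneg (x' s)
    positivity
  have hu_eq : ∀ s,
      (g0 (x' s) (x' s) + (g0 δ (x' s) / β) * g0 δ (x' s)) * (1 / β) = u s := fun s => by
    simp only [u]
    field_simp
    ring
  have hu_int : IntervalIntegrable u volume 0 1 := by
    simpa only [hu_eq] using hint3.mul_const (1 / β)
  rw [← intervalIntegral.integral_mul_const, intervalIntegral.integral_congr fun s _ => hu_eq s,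
    intervalIntegral.integral_sub hint1 hint2, sub_le_sub_iff_left]
  exact intervalIntegral_sqrt_le_sqrt_intervalIntegral (fun s _ => hu_nonneg s) hu_int hint2

/-- the inequality `T̃₋(x) ≤ T₋(x)` (second half of formula (stimo) of the
paper) for an `H¹` curve `x : [0,1] → ℝⁿ` with constant coefficients `g0, δ, β` and
`g̃0 = g0/β`. -/
theorem Ttildeminus_le_Tminus {n : ℕ}
    (g0 : EuclideanSpace ℝ (Fin n) →ₗ[ℝ] EuclideanSpace ℝ (Fin n) →ₗ[ℝ] ℝ)
    (hsymm : ∀ x y, g0 x y = g0 y x)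
    (hpos : ∀ y, y ≠ 0 → 0 < g0 y y)
    (δ : EuclideanSpace ℝ (Fin n)) (β : ℝ) (hβ : 0 < β)
    (x x' : ℝ → EuclideanSpace ℝ (Fin n))
    (hx : ∀ s ∈ Set.Icc (0 : ℝ) 1, HasDerivAt x (x' s) s)
    (hint1 : IntervalIntegrable (fun s => g0 δ (x' s) / β) volume 0 1)
    (hint2 : IntervalIntegrable
      (fun s => Real.sqrt ((g0 δ (x' s) / β) ^ 2 + g0 (x' s) (x' s) / β)) volume 0 1)
    (hint3 : IntervalIntegrable
      (fun s => g0 (x' s) (x' s) + (g0 δ (x' s) / β) * g0 δ (x' s)) volume 0 1) :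
    (∫ s in (0:ℝ)..1, g0 δ (x' s) / β)
      - Real.sqrt
          ((∫ s in (0:ℝ)..1, (g0 (x' s) (x' s) + (g0 δ (x' s) / β) * g0 δ (x' s)))
            * (1 / β))
      ≤ ∫ s in (0:ℝ)..1,
          (g0 δ (x' s) / β - Real.sqrt ((g0 δ (x' s) / β) ^ 2 + g0 (x' s) (x' s) / β)) :=
  Ttildeminus_le_Tminus_general g0 hpos δ β hβ x' hint1 hint2 hint3
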